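/- Let C be a self-orthogonal right R-module and n ≥ 0. If M is a right R-module with Ext^i_R(M, C) = 0 for all i ≥ 1, and there exists an exact sequence 0 → Cₙ → ··· → C₁ → C₀ → M → 0 with each C_i ∈ add(C), then M ∈ add(C). -/

import Mathlib

/-!
STATEMENT 4: Let C be a self-orthogonal right R-module (right R-modules are modeled
as `Rᵐᵒᵖ`-modules) and n ≥ 0.  If M satisfies Ext^i_R(M, C) = 0 for all i ≥ 1 and
admits an exact sequence 0 → Cₙ → ⋯ → C₁ → C₀ → M → 0 with each Cᵢ ∈ add(C),
then M ∈ add(C).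
Encoding: `D 0, …, D n` are `Cₙ, …, C₀` and `D (n+1) = M`; the maps are
`d i : D i ⟶ D (i+1)`; values of `D`, `d` at indices `> n+1` are irrelevant.
-/

open CategoryTheory Opposite

/-- `extM A i X Y` is the Ext group `Ext^i_A(X, Y)` in the category of `A`-modules. -/
noncomputable def extM (A : Type) [Ring A] (i : ℕ) (X Y : ModuleCat.{0} A) : ModuleCat.{0} ℤ :=
  ((Ext ℤ (ModuleCat.{0} A) i).obj (op X)).obj Y

/-- `N ∈ add(C)`: `N` is a direct summand of a finite direct sum of copies of `C`. -/
def memAdd (A : Type) [Ring A] (C : Type) [AddCommGroup C] [Module A C]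
    (N : ModuleCat.{0} A) : Prop :=
  ∃ (k : ℕ) (s : N →ₗ[A] (Fin k → C)) (r : (Fin k → C) →ₗ[A] N),
    r ∘ₗ s = LinearMap.id

/-!
Fix a projective resolution `P` of `M`; `P.HomExactAtSucc i Y` says that every `(i + 1)`-cocycle
of `Hom(P, Y)` is a coboundary, which follows from `Ext^{i+1}(M, Y) = 0`.
This property in all degrees passes from `C` to every module of `add(C)`, and along a short exact
sequence `0 → Y₁ → Y₂ → Y₃ → 0` from `Y₁` (one degree up) and `Y₂` to `Y₃`, by the usual
diagram chase. Dimension shifting along `0 → ker dⱼ → D j → ker dⱼ₊₁ → 0`, starting from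
`ker d₀ = 0`, gives it for every kernel; in degree 1 for `ker dₙ` it makes the sequence
`0 → ker dₙ → D n → M → 0` split: `M` is a retract of `D n ∈ add(C)`.
-/

namespace CategoryTheory.ProjectiveResolution

open Limits

variable {𝒞 : Type*} [Category 𝒞] [Abelian 𝒞] {X : 𝒞} (P : ProjectiveResolution X)

def HomExactAtSucc (i : ℕ) (Y : 𝒞) : Prop :=
  ∀ f : P.complex.X (i + 1) ⟶ Y, P.complex.d (i + 2) (i + 1) ≫ f = 0 →
    ∃ g : P.complex.X i ⟶ Y, P.complex.d (i + 1) i ≫ g = f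

lemma homExactAtSucc_of_subsingleton_ext [EnoughProjectives 𝒞] {i : ℕ} {Y : 𝒞}
    (h : Subsingleton (((Ext ℤ 𝒞 (i + 1)).obj (op X)).obj Y)) : P.HomExactAtSucc i Y := by
  have hzero : IsZero ((P.complex.linearYonedaObj ℤ Y).homology (i + 1)) :=
    (ModuleCat.isZero_of_subsingleton _).of_iso (P.isoExt (i + 1) Y).symm
  rw [← HomologicalComplex.exactAt_iff_isZero_homology,
    HomologicalComplex.exactAt_iff' _ i (i + 1) (i + 2) (by simp) (by simp),
    ShortComplex.moduleCat_exact_iff] at hzero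
  exact fun f hf => hzero f hf

variable {P}

lemma HomExactAtSucc.of_isZero {i : ℕ} {Y : 𝒞} (hY : IsZero Y) : P.HomExactAtSucc i Y :=
  fun _ _ => ⟨0, hY.eq_of_tgt _ _⟩

lemma HomExactAtSucc.of_retract {i : ℕ} {Y Y' : 𝒞} (h : P.HomExactAtSucc i Y)
    (e : Retract Y' Y) : P.HomExactAtSucc i Y' := by
  intro f hf
  obtain ⟨g, hg⟩ := h (f ≫ e.i) (by rw [reassoc_of% hf, zero_comp])
  exact ⟨g ≫ e.r, by rw [reassoc_of% hg, e.retract, Category.comp_id]⟩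

lemma HomExactAtSucc.exists_d_comp_sub_comp_eq_zero {i : ℕ} {S : ShortComplex 𝒞}
    (hS : S.ShortExact) (h : P.HomExactAtSucc i S.X₁) (f : P.complex.X i ⟶ S.X₂)
    (hf : P.complex.d (i + 1) i ≫ f ≫ S.g = 0) :
    ∃ θ : P.complex.X i ⟶ S.X₁, P.complex.d (i + 1) i ≫ (f - θ ≫ S.f) = 0 := by
  have := hS.mono_f
  let χ := hS.exact.lift (P.complex.d (i + 1) i ≫ f) (by rw [Category.assoc, hf])
  obtain ⟨θ, hθ⟩ := h χ (by
    rw [← cancel_mono S.f, Category.assoc, hS.exact.lift_f, zero_comp,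
      P.complex.d_comp_d_assoc, zero_comp])
  exact ⟨θ, by rw [Preadditive.comp_sub, reassoc_of% hθ, hS.exact.lift_f, sub_self]⟩

lemma HomExactAtSucc.of_shortExact {i : ℕ} {S : ShortComplex 𝒞} (hS : S.ShortExact)
    (h₁ : P.HomExactAtSucc (i + 1) S.X₁) (h₂ : P.HomExactAtSucc i S.X₂) :
    P.HomExactAtSucc i S.X₃ := by
  have := hS.epi_g
  intro f hf
  obtain ⟨θ, hθ⟩ := h₁.exists_d_comp_sub_comp_eq_zero hS (Projective.factorThru f S.g)
    (by rw [Projective.factorThru_comp, hf])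
  obtain ⟨ξ, hξ⟩ := h₂ _ hθ
  exact ⟨ξ ≫ S.g, by rw [reassoc_of% hξ, Preadditive.sub_comp, Projective.factorThru_comp,
    Category.assoc, S.zero, comp_zero, sub_zero]⟩

lemma HomExactAtSucc.isSplitEpi_g {S : ShortComplex 𝒞} {P : ProjectiveResolution S.X₃}
    (h : P.HomExactAtSucc 0 S.X₁) (hS : S.ShortExact) : IsSplitEpi S.g := by
  have := hS.epi_g
  let ε : P.complex.X 0 ⟶ S.X₃ := P.π.f 0
  have : Epi ε := inferInstanceAs (Epi (P.π.f 0))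
  have hε : P.complex.d 1 0 ≫ ε = 0 := P.complex_d_comp_π_f_zero
  have hεcoker : IsColimit (CokernelCofork.ofπ ε hε) := P.isColimitCokernelCofork
  obtain ⟨θ, hθ⟩ := h.exists_d_comp_sub_comp_eq_zero hS (Projective.factorThru ε S.g)
    (by rw [Projective.factorThru_comp, hε])
  obtain ⟨σ, hσ⟩ := CokernelCofork.IsColimit.desc' hεcoker _ hθ
  simp only [Cofork.π_ofπ] at hσ
  refine ⟨⟨σ, ?_⟩⟩
  rw [← cancel_epi ε, reassoc_of% hσ, Preadditive.sub_comp, Projective.factorThru_comp,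
    Category.assoc, S.zero, comp_zero, sub_zero, Category.comp_id]

section ModuleCat

variable {A : Type} [Ring A] {C : Type} [AddCommGroup C] [Module A C]
  {X : ModuleCat.{0} A} {P : ProjectiveResolution X}

lemma HomExactAtSucc.pi {i : ℕ} (ι : Type)
    (h : P.HomExactAtSucc i (ModuleCat.of A C)) :
    P.HomExactAtSucc i (ModuleCat.of A (ι → C)) := by
  intro f hf
  choose g hg using fun j : ι => h (f ≫ ModuleCat.ofHom (LinearMap.proj j))
    (by rw [reassoc_of% hf, zero_comp])
  refine ⟨ModuleCat.ofHom (LinearMap.pi fun j => (g j).hom), ?_⟩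
  ext x j
  exact congr($(hg j) x)

lemma HomExactAtSucc.of_memAdd {i : ℕ}
    (h : P.HomExactAtSucc i (ModuleCat.of A C)) {N : ModuleCat.{0} A} (hN : memAdd A C N) :
    P.HomExactAtSucc i N := by
  obtain ⟨k, s, r, hrs⟩ := hN
  exact (h.pi (Fin k)).of_retract ⟨ModuleCat.ofHom s, ModuleCat.ofHom r, ModuleCat.hom_ext hrs⟩

end ModuleCat

end CategoryTheory.ProjectiveResolution

section

variable {A : Type} [Ring A]

lemma memAdd_of_retract {C : Type} [AddCommGroup C] [Module A C] {N N' : ModuleCat.{0} A}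
    (e : Retract N' N) (hN : memAdd A C N) : memAdd A C N' := by
  obtain ⟨k, s, r, hrs⟩ := hN
  refine ⟨k, s ∘ₗ e.i.hom, e.r.hom ∘ₗ r, ?_⟩
  rw [LinearMap.comp_assoc, ← LinearMap.comp_assoc _ s, hrs, LinearMap.id_comp,
    ← ModuleCat.hom_comp, e.retract, ModuleCat.hom_id]

lemma LinearMap.shortExact_ker_codRestrict {M N L : Type} [AddCommGroup M] [Module A M]
    [AddCommGroup N] [Module A N] [AddCommGroup L] [Module A L] {f : M →ₗ[A] N}
    {g : N →ₗ[A] L} (hfg : Function.Exact f g) :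
    (ModuleCat.shortComplexOfCompEqZero (ker f).subtype
      (f.codRestrict (ker g) fun x => hfg.apply_apply_eq_zero x)
      (by ext x; exact x.2)).ShortExact := by
  refine ModuleCat.shortComplex_shortExact _ ?_ (ker f).injective_subtype ?_
  · refine fun x => ⟨fun hx => ⟨⟨x, congrArg Subtype.val hx⟩, rfl⟩, ?_⟩
    rintro ⟨y, rfl⟩
    exact Subtype.ext y.2
  · rintro ⟨y, hy⟩
    obtain ⟨x, rfl⟩ := (hfg y).mp hy
    exact ⟨x, rfl⟩

end

theorem stmt4_general (R : Type) [Ring R] (C : Type) [AddCommGroup C] [Module Rᵐᵒᵖ C] (n : ℕ)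
    (D : ℕ → ModuleCat.{0} Rᵐᵒᵖ) (d : ∀ i, D i ⟶ D (i + 1))
    (hinj : Function.Injective (d 0))
    (hsurj : Function.Surjective (d n))
    (hexact : ∀ i < n, Function.Exact (d i) (d (i + 1)))
    (hCi : ∀ i ≤ n, memAdd Rᵐᵒᵖ C (D i))
    (hM : ∀ i, 1 ≤ i → Subsingleton (extM Rᵐᵒᵖ i (D (n + 1)) (ModuleCat.of Rᵐᵒᵖ C))) :
    memAdd Rᵐᵒᵖ C (D (n + 1)) := by
  let P := projectiveResolution (D (n + 1))
  have hC (i : ℕ) : P.HomExactAtSucc i (ModuleCat.of Rᵐᵒᵖ C) :=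
    P.homExactAtSucc_of_subsingleton_ext (hM (i + 1) (by omega))
  let K (j : ℕ) := ModuleCat.of Rᵐᵒᵖ (LinearMap.ker (d j).hom)
  have hK : ∀ j ≤ n, ∀ i, P.HomExactAtSucc i (K j) := by
    intro j
    induction j with
    | zero =>
      have : Subsingleton (K 0) :=
        Submodule.subsingleton_iff_eq_bot.mpr (LinearMap.ker_eq_bot.mpr hinj)
      exact fun _ _ => .of_isZero (ModuleCat.isZero_of_subsingleton _)
    | succ j ih =>
      exact fun hj i => .of_shortExact
        (LinearMap.shortExact_ker_codRestrict (hexact j (by omega)))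
        (ih (by omega) (i + 1)) ((hC i).of_memAdd (hCi j (by omega)))
  have := (hK n le_rfl 0).isSplitEpi_g (LinearMap.shortExact_shortComplexKer hsurj)
  exact memAdd_of_retract ⟨section_ (d n), d n, IsSplitEpi.id _⟩ (hCi n le_rfl)

theorem stmt4 (R : Type) [Ring R] (C : Type) [AddCommGroup C] [Module Rᵐᵒᵖ C] (n : ℕ)
    (hso : ∀ i, 1 ≤ i →
      Subsingleton (extM Rᵐᵒᵖ i (ModuleCat.of Rᵐᵒᵖ C) (ModuleCat.of Rᵐᵒᵖ C)))
    (D : ℕ → ModuleCat.{0} Rᵐᵒᵖ) (d : ∀ i, D i ⟶ D (i + 1))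
    (hinj : Function.Injective (d 0))
    (hsurj : Function.Surjective (d n))
    (hexact : ∀ i < n, Function.Exact (d i) (d (i + 1)))
    (hCi : ∀ i ≤ n, memAdd Rᵐᵒᵖ C (D i))
    (hM : ∀ i, 1 ≤ i → Subsingleton (extM Rᵐᵒᵖ i (D (n + 1)) (ModuleCat.of Rᵐᵒᵖ C))) :
    memAdd Rᵐᵒᵖ C (D (n + 1)) :=
  stmt4_general R C n D d hinj hsurj hexact hCi hM
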